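/- Let X = (X,a) be a U-category (lax algebra for the ultrafilter monad over a quantale V satisfying the theory axioms, e.g. a topological space for V = 2). For A ⊆ X define φ_A(x) = ⋁{ a(𝔞,x) : 𝔞 an ultrafilter on X with A ∈ 𝔞 }. Then for every ultrafilter 𝔵 on X and every x ∈ X: a(𝔵,x) = ⋀_{A ∈ 𝔵} φ_A(x). -/

import Mathlib

/-- `ξ(𝔳) = ⋀_{A ∈ 𝔳} ⋁ A`, the structure map of the general ultrafilter theory. -/
noncomputable def xi {V : Type u} [CompleteLattice V] (𝔳 : Ultrafilter V) : V :=
  ⨅ A ∈ 𝔳, sSup A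

/-- The lax extension of the ultrafilter functor applied to the structure matrix
`a : X ⇸ UX`:  `T_ξ a (𝔛,𝔵) = ⋁ { ξ(Ua(𝔴)) ∣ 𝔴 ∈ U(UX × X), Uπ₁𝔴 = 𝔛, Uπ₂𝔴 = 𝔵 }`. -/
noncomputable def Uext {V : Type u} [CompleteLattice V] {X : Type v}
    (a : Ultrafilter X → X → V)
    (𝔛 : Ultrafilter (Ultrafilter X)) (𝔵 : Ultrafilter X) : V :=
  ⨆ 𝔴 : {w : Ultrafilter (Ultrafilter X × X) //
      w.map Prod.fst = 𝔛 ∧ w.map Prod.snd = 𝔵},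
    xi ((𝔴 : Ultrafilter (Ultrafilter X × X)).map fun p => a p.1 p.2)

/-!
Put `w := ⋀_{A ∈ 𝔵} φ_A(x)`; the inequality `a(𝔵,x) ≤ w` is immediate from `A ∈ 𝔵`. For the
converse, by complete distributivity it suffices to bound every `u ≪ w`. Such a `u` lies below
some `a(𝔞,x)` with `A ∈ 𝔞` for each `A ∈ 𝔵`, i.e. `𝔵` lies in the closure of
`S = {𝔞 | u ≤ a(𝔞,x)}` in the Stone–Čech topology of `UX`. Hence some `𝔛 ∈ UUX` with `S ∈ 𝔛`
converges to `𝔵`, that is `m_X 𝔛 = 𝔵`. Pairing `𝔛` with the constant `x` gives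
`u ≤ Ua(𝔛, ẋ)`, and transitivity with `a(ẋ, x) = ⊤` yields `u ≤ a(𝔵, x)`.
-/

open Filter

section CompleteLattice

variable {V : Type*} [CompleteLattice V]

def TotallyBelow (u w : V) : Prop :=
  ∀ S : Set V, w ≤ sSup S → ∃ s ∈ S, u ≤ s

theorem TotallyBelow.exists_le_of_le_biSup {ι : Type*} {u w : V} (h : TotallyBelow u w)
    {s : Set ι} {f : ι → V} (hw : w ≤ ⨆ i ∈ s, f i) : ∃ i ∈ s, u ≤ f i := by
  rw [← sSup_image] at hw
  obtain ⟨_, ⟨i, hi, rfl⟩, hu⟩ := h _ hw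
  exact ⟨i, hi, hu⟩

theorem le_of_forall_totallyBelow_le
    (hcd : ∀ w : V, w = sSup {u | TotallyBelow u w}) {w c : V}
    (h : ∀ u, TotallyBelow u w → u ≤ c) : w ≤ c :=
  (hcd w).trans_le (sSup_le h)

theorem le_xi_map {α : Type*} {f : α → V} {𝔛 : Ultrafilter α} {u : V}
    (h : ∀ᶠ p in 𝔛, u ≤ f p) : u ≤ xi (𝔛.map f) := by
  refine le_iInf₂ fun S hS => ?_
  obtain ⟨p, hpS, hp⟩ := Ultrafilter.nonempty_of_mem (inter_mem (Ultrafilter.mem_map.mp hS) h)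
  exact hp.trans (le_sSup hpS)

end CompleteLattice

namespace Ultrafilter

variable {X : Type*}

theorem mem_closure_iff {S : Set (Ultrafilter X)} {𝔵 : Ultrafilter X} :
    𝔵 ∈ closure S ↔ ∀ A ∈ 𝔵, ∃ 𝔞, A ∈ 𝔞 ∧ 𝔞 ∈ S := by
  simp only [ultrafilterBasis_is_basis.mem_closure_iff, ultrafilterBasis, Set.forall_mem_range,
    Set.mem_ofPred_eq, Set.Nonempty, Set.mem_inter_iff]

theorem exists_bind_id_eq_of_mem_closure {S : Set (Ultrafilter X)} {𝔵 : Ultrafilter X}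
    (h : 𝔵 ∈ closure S) : ∃ 𝔛 : Ultrafilter (Ultrafilter X), S ∈ 𝔛 ∧ 𝔛.bind id = 𝔵 := by
  obtain ⟨𝔛, hS, hlim⟩ := mem_closure_iff_ultrafilter.mp h
  exact ⟨𝔛, hS, (ultrafilter_converges_iff.mp hlim).symm⟩

end Ultrafilter

theorem le_Uext_pure {V : Type*} [CompleteLattice V] {X : Type*} {a : Ultrafilter X → X → V}
    {𝔛 : Ultrafilter (Ultrafilter X)} {x : X} {u : V} (h : ∀ᶠ 𝔞 in 𝔛, u ≤ a 𝔞 x) :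
    u ≤ Uext a 𝔛 (pure x) := by
  have hfst : (𝔛.map fun 𝔞 => (𝔞, x)).map Prod.fst = 𝔛 := by
    rw [Ultrafilter.map_map]; exact 𝔛.map_id'
  have hsnd : (𝔛.map fun 𝔞 => (𝔞, x)).map Prod.snd = pure x := by
    apply Ultrafilter.coe_injective
    rw [Ultrafilter.map_map, Ultrafilter.coe_map, Ultrafilter.coe_pure]
    exact map_const
  refine le_iSup_of_le ⟨𝔛.map fun 𝔞 => (𝔞, x), hfst, hsnd⟩ ?_
  rw [Ultrafilter.map_map]
  exact le_xi_map h

theorem stmt16_general {V : Type u} [CompleteLattice V] [CommMonoid V]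
    (hk : (1 : V) = ⊤)
    (hcd : ∀ w : V, w = sSup {u | ∀ S : Set V, w ≤ sSup S → ∃ s ∈ S, u ≤ s})
    {X : Type v} (a : Ultrafilter X → X → V)
    (hunit : ∀ x : X, (1 : V) ≤ a (pure x) x)
    (htrans : ∀ (𝔛 : Ultrafilter (Ultrafilter X)) (𝔶 : Ultrafilter X) (x : X),
      Uext a 𝔛 𝔶 * a 𝔶 x ≤ a (𝔛.bind id) x) :
    ∀ (𝔵 : Ultrafilter X) (x : X),
      a 𝔵 x = ⨅ A ∈ 𝔵, ⨆ 𝔞 ∈ {𝔞 : Ultrafilter X | A ∈ 𝔞}, a 𝔞 x := by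
  intro 𝔵 x
  refine le_antisymm (le_iInf₂ fun A hA => le_iSup₂_of_le 𝔵 hA le_rfl) ?_
  refine le_of_forall_totallyBelow_le hcd fun u hu => ?_
  have hclosure : 𝔵 ∈ closure {𝔞 | u ≤ a 𝔞 x} := Ultrafilter.mem_closure_iff.mpr fun A hA =>
    hu.exists_le_of_le_biSup (iInf₂_le A hA)
  obtain ⟨𝔛, h𝔛, hbind⟩ := Ultrafilter.exists_bind_id_eq_of_mem_closure hclosure
  have hpure : a (pure x) x = 1 := le_antisymm (hk ▸ le_top) (hunit x)
  calc u ≤ Uext a 𝔛 (pure x) * a (pure x) x := by rw [hpure, mul_one]; exact le_Uext_pure h𝔛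
    _ ≤ a (𝔛.bind id) x := htrans 𝔛 (pure x) x
    _ = a 𝔵 x := by rw [hbind]

/-- For a `U`-category `(X,a)` over the general ultrafilter theory (`V` integral and
completely distributive), with `φ_A(x) = ⋁{a(𝔞,x) : A ∈ 𝔞}`, one has
`a(𝔵,x) = ⋀_{A ∈ 𝔵} φ_A(x)`. -/
theorem stmt16 {V : Type u} [CompleteLattice V] [CommMonoid V]
    (hd : ∀ (x : V) (S : Set V), x * sSup S = ⨆ s ∈ S, x * s)
    (hk : (1 : V) = ⊤)
    (hcd : ∀ w : V, w = sSup {u | ∀ S : Set V, w ≤ sSup S → ∃ s ∈ S, u ≤ s})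
    {X : Type v} (a : Ultrafilter X → X → V)
    (hunit : ∀ x : X, (1 : V) ≤ a (pure x) x)
    (htrans : ∀ (𝔛 : Ultrafilter (Ultrafilter X)) (𝔶 : Ultrafilter X) (x : X),
      Uext a 𝔛 𝔶 * a 𝔶 x ≤ a (𝔛.bind id) x) :
    ∀ (𝔵 : Ultrafilter X) (x : X),
      a 𝔵 x = ⨅ A ∈ 𝔵, ⨆ 𝔞 ∈ {𝔞 : Ultrafilter X | A ∈ 𝔞}, a 𝔞 x :=
  stmt16_general hk hcd a hunit htrans
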